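/- Suppose S is absolutely continuous with S(0) > 0 and satisfies S'(t) + C·S(t)^{(1+r₀)/(2r₀)} ≤ Γ(t) for constants C > 0, r₀ ∈ (0,1), where Γ(t) ≤ M(1+t)^{−θ} with θ ≥ (1+r₀)/(1−r₀) (or Γ(t) ≤ M e^{−θt}, θ > 0). Then there exists c > 0 (depending on S(0)) such that S(t) ≤ c·t^{−2r₀/(1−r₀)} for all t > 0. -/

import Mathlib

/-!
With `α = 2r₀/(1-r₀)` and `p = (1+r₀)/(2r₀)` one has `αp = α + 1`, so `φ(t) = A(1+t)^(-α)`
satisfies `φ' + Cφ^p = (CA^p - αA)(1+t)^(-(α+1))`. Under either hypothesis on `Γ` the forcing is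
at most `K(1+t)^(-(α+1))` on `[0, ∞)` (an exponential beats every power), so for `A ≥ S 0` large
`φ` is a strict supersolution. At a first point where `S` reaches `φ` we would get `S' < φ'`,
hence `S ≤ φ ≤ A t^(-α)`.
-/

open Real Set Filter

theorem one_add_rpow_le_mul_exp {β θ t : ℝ} (hβ : 0 < β) (hθ : 0 < θ) (ht : 0 ≤ t) :
    (1 + t) ^ β ≤ max 1 (β / θ) ^ β * exp (θ * t) := by
  set k := β / θ with hk
  have hk0 : 0 < k := div_pos hβ hθ
  have hlin : 1 + t ≤ max 1 k * (1 + t / k) := by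
    rcases le_total k 1 with h | h
    · rw [max_eq_left h, one_mul]
      have : t ≤ t / k := (le_div_iff₀ hk0).2 (mul_le_of_le_one_right ht h)
      linarith
    · rw [max_eq_right h, mul_add, mul_div_cancel₀ _ hk0.ne', mul_one]
      linarith
  calc (1 + t) ^ β ≤ (max 1 k * (1 + t / k)) ^ β := by gcongr
    _ = max 1 k ^ β * (1 + t / k) ^ β := by
        rw [mul_rpow (by positivity) (by positivity)]
    _ ≤ max 1 k ^ β * exp (t / k) ^ β := by
        gcongr
        linarith [add_one_le_exp (t / k)]
    _ = max 1 k ^ β * exp (θ * t) := by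
        rw [← exp_mul, hk]
        congr 2
        field_simp

theorem exists_exp_neg_mul_le_mul_one_add_rpow_neg {β θ : ℝ} (hβ : 0 < β) (hθ : 0 < θ) :
    ∃ K, ∀ t ≥ (0 : ℝ), exp (-θ * t) ≤ K * (1 + t) ^ (-β) := by
  refine ⟨max 1 (β / θ) ^ β, fun t ht => ?_⟩
  have h1t : 0 < 1 + t := by linarith
  rw [rpow_neg h1t.le, ← div_eq_mul_inv, le_div_iff₀ (rpow_pos_of_pos h1t β), neg_mul, exp_neg,
    inv_mul_le_iff₀ (exp_pos _), mul_comm (exp _)]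
  exact one_add_rpow_le_mul_exp hβ hθ ht

theorem exists_le_mul_one_add_rpow_neg {Γ : ℝ → ℝ} {M θ β : ℝ} (hβ : 0 < β)
    (hΓ : (β ≤ θ ∧ ∀ t ≥ (0 : ℝ), Γ t ≤ M * (1 + t) ^ (-θ)) ∨
      (0 < θ ∧ ∀ t ≥ (0 : ℝ), Γ t ≤ M * exp (-θ * t))) :
    ∃ K, ∀ t ≥ (0 : ℝ), Γ t ≤ K * (1 + t) ^ (-β) := by
  rcases hΓ with ⟨hθ, hΓ⟩ | ⟨hθ, hΓ⟩
  · refine ⟨max M 0, fun t ht => ?_⟩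
    calc Γ t ≤ M * (1 + t) ^ (-θ) := hΓ t ht
      _ ≤ max M 0 * (1 + t) ^ (-θ) := by gcongr; exact le_max_left _ _
      _ ≤ max M 0 * (1 + t) ^ (-β) := by
          gcongr
          linarith
  · obtain ⟨K, hK⟩ := exists_exp_neg_mul_le_mul_one_add_rpow_neg hβ hθ
    refine ⟨max M 0 * K, fun t ht => ?_⟩
    calc Γ t ≤ M * exp (-θ * t) := hΓ t ht
      _ ≤ max M 0 * exp (-θ * t) := by gcongr; exact le_max_left _ _
      _ ≤ max M 0 * (K * (1 + t) ^ (-β)) := by gcongr; exact hK t ht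
      _ = max M 0 * K * (1 + t) ^ (-β) := by ring

theorem eventually_add_lt_mul_rpow {C p : ℝ} (hC : 0 < C) (hp : 1 < p) (a b : ℝ) :
    ∀ᶠ A in atTop, a * A + b < C * A ^ p := by
  have h : Tendsto (fun A : ℝ => A * (C * A ^ (p - 1) + -a)) atTop atTop :=
    tendsto_id.atTop_mul_atTop₀ (tendsto_atTop_add_const_right _ _
      ((tendsto_rpow_atTop (sub_pos.2 hp)).const_mul_atTop hC))
  filter_upwards [h.eventually_gt_atTop b, eventually_gt_atTop 0] with A hA hA0
  rw [rpow_sub_one hA0.ne'] at hA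
  field_simp at hA
  linarith

theorem le_of_hasDerivAt_of_supersolution {S S' φ φ' F G : ℝ → ℝ} {a : ℝ}
    (hS : ∀ t ≥ a, HasDerivAt S (S' t) t) (hφ : ∀ t ≥ a, HasDerivAt φ (φ' t) t)
    (ha : S a ≤ φ a) (hsub : ∀ t ≥ a, S' t + F (S t) ≤ G t)
    (hsup : ∀ t ≥ a, G t < φ' t + F (φ t)) :
    ∀ t ≥ a, S t ≤ φ t := fun b hb =>
  image_le_of_deriv_right_lt_deriv_boundary'
    (fun x hx => (hS x hx.1).continuousAt.continuousWithinAt)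
    (fun x hx => (hS x hx.1).hasDerivWithinAt) ha
    (fun x hx => (hφ x hx.1).continuousAt.continuousWithinAt)
    (fun x hx => (hφ x hx.1).hasDerivWithinAt)
    (fun x hx hSφ => by linarith [hsub x hx.1, hsup x hx.1, congrArg F hSφ])
    (right_mem_Icc.2 hb)

theorem hasDerivAt_mul_one_add_rpow_neg (A α : ℝ) {t : ℝ} (ht : 0 < 1 + t) :
    HasDerivAt (fun s => A * (1 + s) ^ (-α)) (-(α * A) * (1 + t) ^ (-(α + 1))) t := by
  have h := ((hasDerivAt_id t).const_add 1).rpow_const (p := -α) (Or.inl ht.ne')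
  refine (h.const_mul A).congr_deriv ?_
  rw [id, show -α - 1 = -(α + 1) by ring]
  ring

theorem mul_one_add_rpow_neg_rpow {A α p t : ℝ} (hA : 0 ≤ A) (ht : 0 ≤ 1 + t)
    (hαp : α * p = α + 1) : (A * (1 + t) ^ (-α)) ^ p = A ^ p * (1 + t) ^ (-(α + 1)) := by
  rw [mul_rpow hA (rpow_nonneg ht _), ← rpow_mul ht, neg_mul, hαp]

theorem stmt_16_general
    (C r₀ M θ : ℝ) (hC : 0 < C) (hr₀ : 0 < r₀) (hr₀1 : r₀ < 1)
    (S S' Γ : ℝ → ℝ)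
    (hSder : ∀ t ≥ (0:ℝ), HasDerivAt S (S' t) t)
    (hΓcase :
      ((1 + r₀) / (1 - r₀) ≤ θ ∧ ∀ t ≥ (0:ℝ), Γ t ≤ M * (1 + t) ^ (-θ)) ∨
      (0 < θ ∧ ∀ t ≥ (0:ℝ), Γ t ≤ M * Real.exp (-θ * t)))
    (hineq : ∀ t ≥ (0:ℝ), S' t + C * S t ^ ((1 + r₀) / (2 * r₀)) ≤ Γ t) :
    ∃ c > (0:ℝ), ∀ t > (0:ℝ), S t ≤ c * t ^ (-(2 * r₀ / (1 - r₀))) := by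
  set α := 2 * r₀ / (1 - r₀)
  set p := (1 + r₀) / (2 * r₀)
  have h1r : 0 < 1 - r₀ := by linarith
  have hα : 0 < α := by positivity
  have hp : 1 < p := by rw [lt_div_iff₀ (by positivity)]; linarith
  have hαp : α * p = α + 1 := by simp only [α, p]; field_simp; ring
  rw [show (1 + r₀) / (1 - r₀) = α + 1 by simp only [α]; field_simp; ring] at hΓcase
  obtain ⟨K, hΓ⟩ := exists_le_mul_one_add_rpow_neg (by positivity) hΓcase
  obtain ⟨A, hA, hAS, hA0⟩ := ((eventually_add_lt_mul_rpow hC hp α K).and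
    ((eventually_ge_atTop (S 0)).and (eventually_gt_atTop 0))).exists
  have hS_le : ∀ t ≥ (0:ℝ), S t ≤ A * (1 + t) ^ (-α) :=
    le_of_hasDerivAt_of_supersolution (F := fun s => C * s ^ p) hSder
      (fun t ht => hasDerivAt_mul_one_add_rpow_neg A α (by linarith)) (by simpa using hAS)
      (fun t ht => (hineq t ht).trans (hΓ t ht)) fun t ht => by
        have hu : 0 < (1 + t) ^ (-(α + 1)) := rpow_pos_of_pos (by linarith) _
        simp only [mul_one_add_rpow_neg_rpow hA0.le (by linarith : 0 ≤ 1 + t) hαp]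
        linarith [mul_lt_mul_of_pos_right hA hu]
  refine ⟨A, hA0, fun t ht => (hS_le t ht.le).trans ?_⟩
  gcongr A * ?_
  exact rpow_le_rpow_of_nonpos ht (by linarith) (by linarith)

/-- Sublinear damping application, fast forcing: decay at the unforced rate
t^{-2r₀/(1-r₀)}. -/
theorem stmt_16
    (C r₀ M θ : ℝ) (hC : 0 < C) (hr₀ : 0 < r₀) (hr₀1 : r₀ < 1) (hM : 0 < M)
    (S S' Γ : ℝ → ℝ) (hS0 : 0 < S 0) (hSnn : ∀ t ≥ (0:ℝ), 0 ≤ S t)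
    (hSder : ∀ t ≥ (0:ℝ), HasDerivAt S (S' t) t)
    (hΓcase :
      ((1 + r₀) / (1 - r₀) ≤ θ ∧ ∀ t ≥ (0:ℝ), Γ t ≤ M * (1 + t) ^ (-θ)) ∨
      (0 < θ ∧ ∀ t ≥ (0:ℝ), Γ t ≤ M * Real.exp (-θ * t)))
    (hineq : ∀ t ≥ (0:ℝ), S' t + C * S t ^ ((1 + r₀) / (2 * r₀)) ≤ Γ t) :
    ∃ c > (0:ℝ), ∀ t > (0:ℝ), S t ≤ c * t ^ (-(2 * r₀ / (1 - r₀))) :=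
  stmt_16_general C r₀ M θ hC hr₀ hr₀1 S S' Γ hSder hΓcase hineq
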